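/- arXiv:1711.02157 — 7 statements merged into one kernel-verified Lean document; each statement's English description precedes it below -/
import Mathlib

section
/- For a quaternion α = a₀ + I a₁ with a₀, a₁ ∈ ℝ, a₁ ≠ 0, and I ∈ 𝕊², the set {a₀ + J a₁ : J ∈ 𝕊²} equals the conjugacy class {r⁻¹ α r : r ∈ ℍ \ {0}}. -/
/-!
Both sets consist of the quaternions `a₀ + a₁ J` with `J ^ 2 = -1`: in `ℍ` the square roots of
`-1` are exactly the purely imaginary unit quaternions, conjugation preserves `J ^ 2 = -1`, and any
two square roots `I`, `J` of `-1` are conjugate. Indeed `(J + I) I = J (J + I)`, so they are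
conjugate by `J + I` unless `J = -I`; in that case one passes through a third root `K ≠ ±I`.
-/

open Quaternion

theorem Quaternion.sq_eq_neg_one_iff {J : ℍ[ℝ]} : J ^ 2 = -1 ↔ J.re = 0 ∧ ‖J‖ = 1 := by
  constructor
  · intro h
    have hn : ‖J‖ = 1 := by
      simpa [norm_pow, pow_eq_one_iff_of_nonneg (norm_nonneg J)] using congrArg norm h
    refine ⟨sq_eq_neg_normSq.1 ?_, hn⟩
    rw [h, normSq_eq_norm_mul_self, hn, mul_one, coe_one]
  · rintro ⟨hre, hn⟩
    rw [sq_eq_neg_normSq.2 hre, normSq_eq_norm_mul_self, hn, mul_one, coe_one]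

theorem isConj_of_sq_eq_neg_one_of_add_ne_zero {D : Type*} [DivisionRing D] {I J : D}
    (hI : I ^ 2 = -1) (hJ : J ^ 2 = -1) (h : J + I ≠ 0) : IsConj I J := by
  refine GroupWithZero.isConj_iff₀.2 ⟨J + I, h, (mul_inv_eq_iff_eq_mul₀ h).2 ?_⟩
  rw [add_mul, mul_add, ← pow_two, ← pow_two, hI, hJ, add_comm]

theorem Quaternion.exists_sq_eq_neg_one_ne (I : ℍ[ℝ]) :
    ∃ K : ℍ[ℝ], K ^ 2 = -1 ∧ K + I ≠ 0 ∧ K - I ≠ 0 := by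
  let b : QuaternionAlgebra.Basis ℍ[ℝ] (-1 : ℝ) 0 (-1) := QuaternionAlgebra.Basis.self ℝ
  have hi : b.i.imJ = 0 := rfl
  have hj : b.j.imJ = 1 := rfl
  by_cases hI : I.imJ = 0
  · refine ⟨b.j, by simp [pow_two], fun h => ?_, fun h => ?_⟩ <;>
      simpa [hI, hj] using congrArg QuaternionAlgebra.imJ h
  · refine ⟨b.i, by simp [pow_two], fun h => hI ?_, fun h => hI ?_⟩ <;>
      simpa [hi] using congrArg QuaternionAlgebra.imJ h

theorem Quaternion.isConj_of_sq_eq_neg_one {I J : ℍ[ℝ]} (hI : I ^ 2 = -1) (hJ : J ^ 2 = -1) :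
    IsConj I J := by
  by_cases h : J + I = 0
  · obtain ⟨K, hK, hKI, hKJ⟩ := exists_sq_eq_neg_one_ne I
    have hJK : J + K ≠ 0 := by rwa [eq_neg_of_add_eq_zero_left h, neg_add_eq_sub]
    exact (isConj_of_sq_eq_neg_one_of_add_ne_zero hI hK hKI).trans
      (isConj_of_sq_eq_neg_one_of_add_ne_zero hK hJ hJK)
  · exact isConj_of_sq_eq_neg_one_of_add_ne_zero hI hJ h

theorem Quaternion.inv_mul_coe_add_smul_mul {r : ℍ[ℝ]} (hr : r ≠ 0) (a b : ℝ) (x : ℍ[ℝ]) :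
    r⁻¹ * ((a : ℍ[ℝ]) + b • x) * r = (a : ℍ[ℝ]) + b • (r⁻¹ * x * r) := by
  rw [mul_add, add_mul, mul_smul_comm, smul_mul_assoc, mul_assoc _ (a : ℍ[ℝ]),
    coe_commutes, ← mul_assoc, inv_mul_cancel₀ hr, one_mul]

theorem gauss_lucas_stmt2_general (a₀ a₁ : ℝ) (I : ℍ[ℝ])
    (hIre : I.re = 0) (hInorm : ‖I‖ = 1) :
    {q : ℍ[ℝ] | ∃ J : ℍ[ℝ], J.re = 0 ∧ ‖J‖ = 1 ∧ q = (a₀ : ℍ[ℝ]) + a₁ • J} =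
      {q : ℍ[ℝ] | ∃ r : ℍ[ℝ], r ≠ 0 ∧ q = r⁻¹ * ((a₀ : ℍ[ℝ]) + a₁ • I) * r} := by
  have hI : I ^ 2 = -1 := sq_eq_neg_one_iff.2 ⟨hIre, hInorm⟩
  ext q
  constructor
  · rintro ⟨J, hJre, hJn, rfl⟩
    obtain ⟨c, hc, hcJ⟩ :=
      GroupWithZero.isConj_iff₀.1 (isConj_of_sq_eq_neg_one hI (sq_eq_neg_one_iff.2 ⟨hJre, hJn⟩))
    refine ⟨c⁻¹, inv_ne_zero hc, ?_⟩
    rw [inv_mul_coe_add_smul_mul (inv_ne_zero hc), inv_inv, hcJ]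
  · rintro ⟨r, hr, rfl⟩
    have hconj : (r⁻¹ * I * r) ^ 2 = -1 := by
      rw [GroupWithZero.conj_pow₀ hr, hI, mul_neg_one, neg_mul, inv_mul_cancel₀ hr]
    obtain ⟨hre, hn⟩ := sq_eq_neg_one_iff.1 hconj
    exact ⟨r⁻¹ * I * r, hre, hn, inv_mul_coe_add_smul_mul hr a₀ a₁ I⟩

theorem gauss_lucas_stmt2 (a₀ a₁ : ℝ) (ha : a₁ ≠ 0) (I : ℍ[ℝ])
    (hIre : I.re = 0) (hInorm : ‖I‖ = 1) :
    {q : ℍ[ℝ] | ∃ J : ℍ[ℝ], J.re = 0 ∧ ‖J‖ = 1 ∧ q = (a₀ : ℍ[ℝ]) + a₁ • J} =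
      {q : ℍ[ℝ] | ∃ r : ℍ[ℝ], r ≠ 0 ∧ q = r⁻¹ * ((a₀ : ℍ[ℝ]) + a₁ • I) * r} :=
  gauss_lucas_stmt2_general a₀ a₁ I hIre hInorm
end

section
/- A quaternion α is a zero of a nonzero quaternionic polynomial P (with right coefficients) if and only if the polynomial q - α is a left divisor of P with respect to the star product, i.e. P = (q - α) * Q for some quaternionic polynomial Q. -/
open Quaternion Polynomial

/-- Evaluation of a quaternionic polynomial with coefficients written on the right:
`P(q) = Σ qⁿ aₙ`. With this evaluation, polynomial multiplication (convolution of
coefficients) is exactly the star product. -/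
noncomputable def qeval (P : Polynomial ℍ[ℝ]) (q : ℍ[ℝ]) : ℍ[ℝ] :=
  P.sum fun n a => q ^ n * a

/-!
Right evaluation is not multiplicative, but `qeval (X * P) q = q * qeval P q`, and
`qeval (C a * P) q = a * qeval P q` whenever `a` commutes with `q`. Since `α` commutes with
itself, `qeval ((X - C α) * Q) α = α * qeval Q α - α * qeval Q α = 0`; with division by the
monic `X - C α`, this gives the remainder theorem `P %ₘ (X - C α) = C (qeval P α)`.
-/

theorem qeval_eq_lsum (P : Polynomial ℍ[ℝ]) (q : ℍ[ℝ]) :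
    qeval P q = lsum (fun n => LinearMap.mulLeft ℝ (q ^ n)) P :=
  rfl

theorem qeval_add (P Q : Polynomial ℍ[ℝ]) (q : ℍ[ℝ]) :
    qeval (P + Q) q = qeval P q + qeval Q q := by
  simp only [qeval_eq_lsum, map_add]

theorem qeval_sub (P Q : Polynomial ℍ[ℝ]) (q : ℍ[ℝ]) :
    qeval (P - Q) q = qeval P q - qeval Q q := by
  simp only [qeval_eq_lsum, map_sub]

theorem qeval_monomial (n : ℕ) (a q : ℍ[ℝ]) : qeval (monomial n a) q = q ^ n * a :=
  sum_monomial_index a _ (mul_zero _)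

theorem qeval_C (a q : ℍ[ℝ]) : qeval (C a) q = a := by
  rw [← monomial_zero_left, qeval_monomial, pow_zero, one_mul]

theorem qeval_X_mul (P : Polynomial ℍ[ℝ]) (q : ℍ[ℝ]) :
    qeval (X * P) q = q * qeval P q := by
  induction P using Polynomial.induction_on' with
  | add P Q hP hQ => rw [mul_add, qeval_add, qeval_add, hP, hQ, mul_add]
  | monomial n a => rw [X_mul_monomial, qeval_monomial, qeval_monomial, pow_succ', mul_assoc]

theorem qeval_C_mul_of_commute {a q : ℍ[ℝ]} (h : Commute a q) (P : Polynomial ℍ[ℝ]) :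
    qeval (C a * P) q = a * qeval P q := by
  induction P using Polynomial.induction_on' with
  | add P Q hP hQ => rw [mul_add, qeval_add, qeval_add, hP, hQ, mul_add]
  | monomial n b =>
    rw [C_mul_monomial, qeval_monomial, qeval_monomial, ← mul_assoc, ← mul_assoc,
      (h.pow_right n).eq]

theorem qeval_X_sub_C_mul_self (Q : Polynomial ℍ[ℝ]) (α : ℍ[ℝ]) :
    qeval ((X - C α) * Q) α = 0 := by
  rw [sub_mul, qeval_sub, qeval_X_mul, qeval_C_mul_of_commute (Commute.refl α), sub_self]

theorem modByMonic_X_sub_C_eq_C_qeval (P : Polynomial ℍ[ℝ]) (α : ℍ[ℝ]) :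
    P %ₘ (X - C α) = C (qeval P α) := by
  have hdeg : (P %ₘ (X - C α)).degree ≤ 0 := Nat.WithBot.lt_one_iff_le_zero.mp <|
    degree_X_sub_C α ▸ degree_modByMonic_lt P (monic_X_sub_C α)
  have hval : qeval P α = (P %ₘ (X - C α)).coeff 0 := by
    conv_lhs => rw [← modByMonic_add_div P (X - C α), qeval_add,
      qeval_X_sub_C_mul_self, add_zero, eq_C_of_degree_le_zero hdeg, qeval_C]
  rw [hval, ← eq_C_of_degree_le_zero hdeg]

theorem X_sub_C_dvd_iff_qeval_eq_zero (P : Polynomial ℍ[ℝ]) (α : ℍ[ℝ]) :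
    X - C α ∣ P ↔ qeval P α = 0 := by
  rw [← modByMonic_eq_zero_iff_dvd (monic_X_sub_C α), modByMonic_X_sub_C_eq_C_qeval, C_eq_zero]

theorem gauss_lucas_stmt6_general (P : Polynomial ℍ[ℝ]) (α : ℍ[ℝ]) :
    qeval P α = 0 ↔ ∃ Q : Polynomial ℍ[ℝ], P = (X - C α) * Q :=
  (X_sub_C_dvd_iff_qeval_eq_zero P α).symm

theorem gauss_lucas_stmt6 (P : Polynomial ℍ[ℝ]) (hP : P ≠ 0) (α : ℍ[ℝ]) :
    qeval P α = 0 ↔ ∃ Q : Polynomial ℍ[ℝ], P = (X - C α) * Q :=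
  gauss_lucas_stmt6_general P α
end

section
/- If a quaternionic polynomial P has two distinct zeros in a single conjugacy class [α], then every element of [α] is a zero of P. -/
open Quaternion Polynomial

/-- The conjugacy class (2-sphere) of a quaternion. -/
def conjClass (α : ℍ[ℝ]) : Set ℍ[ℝ] :=
  {x | ∃ r : ℍ[ℝ], r ≠ 0 ∧ x = r⁻¹ * α * r}

lemma re_conjClass {α x : ℍ[ℝ]} (hx : x ∈ conjClass α) : x.re = α.re := by
  obtain ⟨r, hr, rfl⟩ := hx
  have h : (r⁻¹ * (α * r)).re = ((α * r) * r⁻¹).re := by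
    simp [Quaternion.re_mul]; ring
  rw [mul_assoc, h, mul_assoc, mul_inv_cancel₀ hr, mul_one]

lemma normSq_conjClass {α x : ℍ[ℝ]} (hx : x ∈ conjClass α) : normSq x = normSq α := by
  obtain ⟨r, hr, rfl⟩ := hx
  have hr' : normSq r ≠ 0 := by simpa [Quaternion.normSq_eq_zero] using hr
  rw [map_mul, map_mul, Quaternion.normSq_inv]
  field_simp

lemma quat_sq (x : ℍ[ℝ]) :
    x * x = ((2 * x.re : ℝ) : ℍ[ℝ]) * x - ((normSq x : ℝ) : ℍ[ℝ]) := by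
  have h1 : x * (x + star x) = x * ((2 * x.re : ℝ) : ℍ[ℝ]) := by
    rw [Quaternion.self_add_star']
  have h2 : x * star x = ((normSq x : ℝ) : ℍ[ℝ]) := Quaternion.self_mul_star x
  rw [mul_add, h2] at h1
  rw [Quaternion.coe_commutes, eq_sub_iff_add_eq]
  exact h1

lemma pow_conjClass (α : ℍ[ℝ]) (n : ℕ) :
    ∃ c d : ℝ, ∀ x ∈ conjClass α, x ^ n = (c : ℍ[ℝ]) * x + (d : ℍ[ℝ]) := by
  induction n with
  | zero => exact ⟨0, 1, fun x _ => by simp⟩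
  | succ n ih =>
    obtain ⟨c, d, h⟩ := ih
    refine ⟨c * (2 * α.re) + d, -(c * normSq α), fun x hx => ?_⟩
    have hsq := quat_sq x
    rw [re_conjClass hx, normSq_conjClass hx] at hsq
    rw [pow_succ, h x hx, add_mul, mul_assoc, hsq]
    push_cast
    noncomm_ring

lemma qeval_decomp (α : ℍ[ℝ]) (P : Polynomial ℍ[ℝ]) :
    ∃ A B : ℍ[ℝ], ∀ x ∈ conjClass α, qeval P x = x * A + B := by
  induction P using Polynomial.induction_on' with
  | add p q hp hq =>
    obtain ⟨A, B, hA⟩ := hp; obtain ⟨A', B', hA'⟩ := hq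
    refine ⟨A + A', B + B', fun x hx => ?_⟩
    have hq : qeval (p + q) x = qeval p x + qeval q x := by
      unfold qeval
      rw [Polynomial.sum_add_index] <;> intros <;> simp [mul_add]
    rw [hq, hA x hx, hA' x hx]
    noncomm_ring
  | monomial n a =>
    obtain ⟨c, d, h⟩ := pow_conjClass α n
    refine ⟨(c : ℍ[ℝ]) * a, (d : ℍ[ℝ]) * a, fun x hx => ?_⟩
    have hm : qeval (monomial n a) x = x ^ n * a := by
      unfold qeval
      rw [Polynomial.sum_monomial_index]
      simp
    rw [hm, h x hx, add_mul, Quaternion.coe_commutes, mul_assoc]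

theorem gauss_lucas_stmt9 (P : Polynomial ℍ[ℝ]) (α β γ : ℍ[ℝ])
    (hβ : β ∈ conjClass α) (hγ : γ ∈ conjClass α) (hne : β ≠ γ)
    (h1 : qeval P β = 0) (h2 : qeval P γ = 0) :
    ∀ δ ∈ conjClass α, qeval P δ = 0 := by
  obtain ⟨A, B, h⟩ := qeval_decomp α P
  have e1 : β * A + B = 0 := by rw [← h β hβ, h1]
  have e2 : γ * A + B = 0 := by rw [← h γ hγ, h2]
  have hA : A = 0 := by
    have hsub : (β - γ) * A = 0 := by
      rw [sub_mul]
      have h3 := e1; have h4 := e2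
      rw [add_eq_zero_iff_eq_neg] at h3 h4
      rw [h3, h4, sub_self]
    rcases mul_eq_zero.mp hsub with h' | h'
    · exact absurd (sub_eq_zero.mp h') hne
    · exact h'
  have hB : B = 0 := by rw [hA, mul_zero, zero_add] at e1; exact e1
  intro δ hδ
  rw [h δ hδ, hA, hB, mul_zero, add_zero]
end

section
/- Let P(q) = Σ_{n=0}^m qⁿ aₙ be a nonconstant quaternionic polynomial with all aₙ real. Then every zero of the derivative P'(q) = Σ_{n=1}^m q^{n-1} n aₙ belongs to the convex hull (in ℍ ≅ ℝ⁴) of the zero set of P. -/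
/-!
A real polynomial commutes with every `ℝ`-algebra map `ℂ → ℍ`, and every quaternion `q` lies in
the image of one: `ℂ ≅ ℝ + ℝ u` with `u` the unit vector along `im q`, so that `u² = -1`.
Pulling `q` back to `ℂ`, the complex Gauss–Lucas theorem puts it in the convex hull of the complex
zeros of `P`; their images are zeros of `P` in `ℍ`, and the `ℝ`-linear map carries convex hulls
to convex hulls.
-/

open Quaternion Polynomial

namespace Quaternion

theorem exists_mul_self_eq_neg_one_and_im_eq_smul (q : ℍ[ℝ]) :
    ∃ u : ℍ[ℝ], u * u = -1 ∧ ∃ r : ℝ, q.im = r • u := by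
  by_cases him : q.im = 0
  · have hi : (⟨0, 1, 0, 0⟩ : ℍ[ℝ]) * ⟨0, 1, 0, 0⟩ = -1 := by
      ext <;> simp [QuaternionAlgebra.mk_mul_mk]
    exact ⟨_, hi, 0, by rw [him]; exact (zero_smul ℝ _).symm⟩
  · have hnorm : ‖q.im‖ ≠ 0 := norm_ne_zero_iff.mpr him
    refine ⟨‖q.im‖⁻¹ • q.im, ?_, ‖q.im‖, (smul_inv_smul₀ hnorm _).symm⟩
    rw [smul_mul_smul_comm, ← sq q.im, im_sq, normSq_eq_norm_mul_self, smul_neg, ← coe_smul,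
      smul_eq_mul]
    field_simp
    simp

theorem exists_algHom_complex_apply_eq (q : ℍ[ℝ]) : ∃ (φ : ℂ →ₐ[ℝ] ℍ[ℝ]) (z : ℂ), φ z = q := by
  obtain ⟨u, hu, r, hr⟩ := exists_mul_self_eq_neg_one_and_im_eq_smul q
  refine ⟨Complex.liftAux u hu, ⟨q.re, r⟩, ?_⟩
  rw [Complex.liftAux_apply, algebraMap_def, ← hr]
  exact q.re_add_im

theorem exists_map_algebraMap_eq_of_im_coeff_eq_zero {P : ℍ[ℝ][X]}
    (h : ∀ n, (P.coeff n).im = 0) : ∃ p : ℝ[X], p.map (algebraMap ℝ ℍ[ℝ]) = P :=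
  (mem_lifts P).mp <| (lifts_iff_coeff_lifts P).mpr fun n => ⟨(P.coeff n).re, by
    rw [algebraMap_def, ← add_zero ((P.coeff n).re : ℍ[ℝ]), ← h n, re_add_im]⟩

end Quaternion

theorem qeval_map_algebraMap (p : ℝ[X]) (q : ℍ[ℝ]) :
    qeval (p.map (algebraMap ℝ ℍ[ℝ])) q = aeval q p := by
  rw [qeval, Polynomial.sum_def, aeval_def, eval₂_eq_sum, Polynomial.sum_def,
    support_map_of_injective p (algebraMap ℝ ℍ[ℝ]).injective]
  refine Finset.sum_congr rfl fun n _ => ?_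
  rw [coeff_map]
  exact (Algebra.commutes (p.coeff n) (q ^ n)).symm

namespace Polynomial

theorem algHom_mem_convexHull_of_aeval_derivative_eq_zero {A : Type*} [Ring A] [Algebra ℝ A]
    [Nontrivial A] (φ : ℂ →ₐ[ℝ] A) {p : ℝ[X]} (hp : 0 < p.degree) {z : ℂ}
    (hz : aeval (φ z) (derivative p) = 0) :
    φ z ∈ convexHull ℝ {w : A | aeval w p = 0} := by
  set g := p.map (algebraMap ℝ ℂ)
  have hg : 0 < g.degree := by rwa [degree_map]
  have hzg : z ∈ g.derivative.rootSet ℂ := by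
    rw [mem_rootSet, derivative_ne_zero, ← pos_iff_ne_zero, natDegree_pos_iff_degree_pos,
      derivative_map, aeval_map_algebraMap]
    refine ⟨hg, (map_eq_zero_iff φ φ.injective).mp ?_⟩
    rwa [← aeval_algHom_apply]
  have himage : φ '' g.rootSet ℂ ⊆ {w : A | aeval w p = 0} := by
    rintro _ ⟨w, hw, rfl⟩
    rw [mem_rootSet, aeval_map_algebraMap] at hw
    rw [Set.mem_ofPred_eq, aeval_algHom_apply, hw.2, map_zero]
  have := Set.mem_image_of_mem φ (rootSet_derivative_subset_convexHull_rootSet hg hzg)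
  rw [← AlgHom.coe_toLinearMap, LinearMap.image_convexHull] at this
  exact convexHull_mono himage this

end Polynomial

theorem gauss_lucas_stmt12 (P : Polynomial ℍ[ℝ]) (hreal : ∀ n, (P.coeff n).im = 0)
    (hnc : 0 < P.natDegree) (q : ℍ[ℝ]) (h : qeval (derivative P) q = 0) :
    q ∈ convexHull ℝ {z : ℍ[ℝ] | qeval P z = 0} := by
  obtain ⟨p, rfl⟩ := exists_map_algebraMap_eq_of_im_coeff_eq_zero hreal
  rw [natDegree_map_eq_of_injective (algebraMap ℝ ℍ[ℝ]).injective,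
    natDegree_pos_iff_degree_pos] at hnc
  rw [derivative_map, qeval_map_algebraMap] at h
  simp only [qeval_map_algebraMap]
  obtain ⟨φ, z, rfl⟩ := exists_algHom_complex_apply_eq q
  exact algHom_mem_convexHull_of_aeval_derivative_eq_zero φ hnc h
end

section
/- The quaternionic polynomial P(q) = q²·(1/2) + q·i + j has zero set Z_P = {-i - ij} and its derivative P'(q) = q + i has zero set {-i}; consequently Z_{P'} is not contained in the convex hull of Z_P, so the naive Gauss-Lucas theorem fails for quaternionic polynomials. -/
open Quaternion Polynomial

theorem qeval_add_s13 (p p' : ℍ[ℝ][X]) (q : ℍ[ℝ]) : qeval (p + p') q = qeval p q + qeval p' q :=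
  sum_add_index p p' _ (fun _ => mul_zero _) (fun _ _ _ => mul_add _ _ _)

theorem qeval_X_pow_mul_C (n : ℕ) (a q : ℍ[ℝ]) : qeval (X ^ n * C a) q = q ^ n * a := by
  rw [X_pow_mul_C, C_mul_X_pow_eq_monomial, qeval_monomial]

theorem qeval_X_mul_C (a q : ℍ[ℝ]) : qeval (X * C a) q = q * a := by
  simpa using qeval_X_pow_mul_C 1 a q

theorem qeval_X (q : ℍ[ℝ]) : qeval X q = q := by
  simpa using qeval_X_mul_C 1 q

theorem qeval_X_add_C_eq_zero_iff (a q : ℍ[ℝ]) : qeval (X + C a) q = 0 ↔ q = -a := by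
  rw [qeval_add_s13, qeval_X, qeval_C, add_eq_zero_iff_eq_neg]

theorem qeval_X_sq_mul_C_add (a b c q : ℍ[ℝ]) :
    qeval (X ^ 2 * C a + X * C b + C c) q = q ^ 2 * a + q * b + c := by
  rw [qeval_add_s13, qeval_add_s13, qeval_X_pow_mul_C, qeval_X_mul_C, qeval_C]

instance {R : Type*} [CommRing R] [CharZero R] : CharZero ℍ[R] :=
  charZero_of_injective_algebraMap Quaternion.algebraMap_injective

theorem derivative_X_sq_mul_C_half_add (a b : ℍ[ℝ]) :
    derivative (X ^ 2 * C (2⁻¹ : ℍ[ℝ]) + X * C a + C b) = X + C a := by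
  rw [X_pow_mul_C, X_mul_C, derivative_add, derivative_add, derivative_C_mul_X_pow,
    derivative_C_mul_X, derivative_C]
  norm_num

/- The four equations are the components of `q ^ 2 / 2 + q i + j = 0` for `q = a + b i + c j + d k`;
the `i`-component `a (b + 1) = 0` splits the proof into the cases `a = 0` and `b = -1`. -/
theorem root_components_eq {a b c d : ℝ}
    (h₁ : (a ^ 2 - b ^ 2 - c ^ 2 - d ^ 2) / 2 - b = 0) (h₂ : a * b + a = 0)
    (h₃ : a * c + d + 1 = 0) (h₄ : a * d - c = 0) :
    a = 0 ∧ b = -1 ∧ c = 0 ∧ d = -1 := by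
  obtain rfl : c = a * d := by linarith
  have hd : d * (a ^ 2 + 1) = -1 := by linear_combination h₃
  rcases mul_eq_zero.mp (show a * (b + 1) = 0 by linarith) with rfl | hb
  · obtain rfl : d = -1 := by linarith
    exact ⟨rfl, by nlinarith, by ring, rfl⟩
  · obtain rfl : b = -1 := by linarith
    have hd_sq : d ^ 2 = 1 := by
      have : (a ^ 2 + 1) * (d ^ 2 - 1) = 0 := by linear_combination -2 * h₁
      linarith [(mul_eq_zero.mp this).resolve_left (by positivity)]
    obtain rfl : a = 0 := pow_eq_zero_iff two_ne_zero |>.mp (by nlinarith)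
    exact ⟨rfl, rfl, by ring, by linarith⟩

theorem sq_mul_half_add_mul_add_eq_zero_iff {i j k : ℍ[ℝ]} (hi : i = ⟨0, 1, 0, 0⟩)
    (hj : j = ⟨0, 0, 1, 0⟩) (hk : k = ⟨0, 0, 0, 1⟩) (q : ℍ[ℝ]) :
    q ^ 2 * 2⁻¹ + q * i + j = 0 ↔ q = -i - k := by
  obtain ⟨ri, ii, ji, ki⟩ := QuaternionAlgebra.ext_iff.mp hi
  obtain ⟨rj, ij, jj, kj⟩ := QuaternionAlgebra.ext_iff.mp hj
  obtain ⟨rk, ik, jk, kk⟩ := QuaternionAlgebra.ext_iff.mp hk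
  have half : (2 : ℍ[ℝ])⁻¹ = ((2⁻¹ : ℝ) : ℍ[ℝ]) := by rw [coe_inv]; rfl
  rw [half, mul_coe_eq_smul]
  simp only [sq, Quaternion.ext_iff, re_add, re_sub, re_neg, re_smul, re_mul, re_zero, imI_add,
    imI_sub, imI_neg, imI_smul, imI_mul, imI_zero, imJ_add, imJ_sub, imJ_neg, imJ_smul, imJ_mul,
    imJ_zero, imK_add, imK_sub, imK_neg, imK_smul, imK_mul, imK_zero, smul_eq_mul, ri, ii, ji, ki,
    rj, ij, jj, kj, rk, ik, jk, kk, mul_zero, mul_one, add_zero, sub_zero, zero_sub, neg_zero]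
  constructor
  · rintro ⟨h₁, h₂, h₃, h₄⟩
    exact root_components_eq (a := q.re) (b := q.imI) (c := q.imJ) (d := q.imK)
      (by linear_combination h₁) (by linear_combination h₂) (by linear_combination h₃)
      (by linear_combination h₄)
  · rintro ⟨h₁, h₂, h₃, h₄⟩
    rw [h₁, h₂, h₃, h₄]
    norm_num

theorem gauss_lucas_stmt13 (i j k : ℍ[ℝ])
    (hi : i = ⟨0, 1, 0, 0⟩) (hj : j = ⟨0, 0, 1, 0⟩) (hk : k = ⟨0, 0, 0, 1⟩)
    (P : Polynomial ℍ[ℝ]) (hP : P = X ^ 2 * C ((2 : ℍ[ℝ])⁻¹) + X * C i + C j) :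
    {q : ℍ[ℝ] | qeval P q = 0} = {-i - k} ∧
    {q : ℍ[ℝ] | qeval (derivative P) q = 0} = {-i} ∧
    ¬ {q : ℍ[ℝ] | qeval (derivative P) q = 0} ⊆
        convexHull ℝ {q : ℍ[ℝ] | qeval P q = 0} := by
  have hZ : {q : ℍ[ℝ] | qeval P q = 0} = {-i - k} := by
    ext q
    rw [Set.mem_ofPred_eq, hP, qeval_X_sq_mul_C_add, sq_mul_half_add_mul_add_eq_zero_iff hi hj hk,
      Set.mem_singleton_iff]
  have hZ' : {q : ℍ[ℝ] | qeval (derivative P) q = 0} = {-i} := by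
    ext q
    rw [Set.mem_ofPred_eq, hP, derivative_X_sq_mul_C_half_add, qeval_X_add_C_eq_zero_iff,
      Set.mem_singleton_iff]
  refine ⟨hZ, hZ', ?_⟩
  rw [hZ, hZ', convexHull_singleton, Set.singleton_subset_singleton, eq_comm, sub_eq_self]
  exact fun hk₀ => by simpa using congrArg QuaternionAlgebra.imK (hk.symm.trans hk₀)
end

section
/- Let P be a quaternionic polynomial. Then Z_{P'} ⊆ Kull(Z_{P^s}) holds if and only if for every I ∈ 𝕊², the zeros of P' lying in the slice ℂ(I) are contained in the convex hull of the zeros of P^s lying in ℂ(I). -/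
/-! The coefficients of `P * Pc` are real, so its zero set `Z` is circular: `x + y I ∈ Z` iff
`x + y J ∈ Z` for all imaginary units `I, J`, because both points are images of `x + y i ∈ ℂ`
under embeddings `ℂ →ₐ[ℝ] ℍ`, which commute with evaluation of real polynomials.
A zero of `P'` lies in the slice of its own imaginary unit, which gives one direction.
For the other, the orthogonal projection of `ℍ` onto `ℂ(I)` is linear, fixes `ℂ(I)`, and maps
each `x + y J ∈ Z` (with `y ≥ 0`) into the segment between `x - y I` and `x + y I`, which both
lie in `Z ∩ ℂ(I)`; so it maps `Kull Z` into `Kull (Z ∩ ℂ(I))`. -/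

open Quaternion Polynomial

theorem add_smul_mem_segment_of_abs_le {E : Type*} [AddCommGroup E] [Module ℝ E] (x v : E)
    {s t : ℝ} (h : |s| ≤ t) : x + s • v ∈ segment ℝ (x + (-t) • v) (x + t • v) := by
  have hs : s ∈ segment ℝ (-t) t := by
    rw [segment_eq_Icc (by linarith [abs_nonneg s])]
    exact abs_le.mp h
  have := Set.mem_image_of_mem (AffineMap.lineMap x (x + v) : ℝ →ᵃ[ℝ] E) hs
  rw [image_segment] at this
  simpa [AffineMap.lineMap_apply_module', add_comm] using this

theorem isSelfAdjoint_coeff_mul_of_coeff_eq_star {R : Type*} [Semiring R] [StarRing R]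
    {P Pc : R[X]} (hPc : ∀ n, Pc.coeff n = star (P.coeff n)) (n : ℕ) :
    IsSelfAdjoint ((P * Pc).coeff n) := by
  rw [IsSelfAdjoint, coeff_mul, star_sum, ← Finset.Nat.sum_antidiagonal_swap]
  refine Finset.sum_congr rfl fun x _ => ?_
  simp [hPc, star_mul]

theorem exists_map_algebraMap_eq_of_isSelfAdjoint_coeff {R : ℍ[ℝ][X]}
    (h : ∀ n, IsSelfAdjoint (R.coeff n)) : ∃ p : ℝ[X], p.map (algebraMap ℝ ℍ[ℝ]) = R :=
  (mem_lifts R).1 <| (lifts_iff_coeff_lifts R).2 fun n =>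
    ⟨(R.coeff n).re, (star_eq_self.1 (h n)).symm⟩

theorem qeval_eq_eval_of_commute {R : ℍ[ℝ][X]} {q : ℍ[ℝ]}
    (h : ∀ n, Commute (q ^ n) (R.coeff n)) : qeval R q = R.eval q := by
  rw [qeval, eval_eq_sum]
  exact Finset.sum_congr rfl fun n _ => (h n).eq

theorem aeval_coe_add_smul_eq_zero_iff (p : ℝ[X]) {J : ℍ[ℝ]} (hJ : J * J = -1) (x y : ℝ) :
    aeval ((x : ℍ[ℝ]) + y • J) p = 0 ↔ aeval (⟨x, y⟩ : ℂ) p = 0 := by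
  have hlift : Complex.liftAux J hJ ⟨x, y⟩ = (x : ℍ[ℝ]) + y • J := by
    simp [Complex.liftAux_apply, Quaternion.algebraMap_def]
  rw [← hlift, aeval_algHom_apply]
  exact map_eq_zero_iff _ (Complex.liftAux J hJ : ℂ →+* ℍ[ℝ]).injective

namespace Quaternion

theorem mul_self_eq_neg_one {I : ℍ[ℝ]} (hI0 : I.re = 0) (hI1 : ‖I‖ = 1) : I * I = -1 := by
  rw [← sq, sq_eq_neg_normSq.2 hI0, normSq_eq_norm_mul_self, hI1]
  simp

theorem exists_eq_re_add_norm_im_smul (q : ℍ[ℝ]) :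
    ∃ J : ℍ[ℝ], J.re = 0 ∧ ‖J‖ = 1 ∧ q = q.re + ‖q.im‖ • J := by
  by_cases him : q.im = 0
  · refine ⟨((Complex.I : ℂ) : ℍ[ℝ]), by simp, ?_, ?_⟩
    · rw [norm_eq_sqrt_real_inner, inner_self, normSq_def']
      simp
    · simpa [him] using (re_add_im q).symm
  · have hpos : 0 < ‖q.im‖ := norm_pos_iff.2 him
    refine ⟨‖q.im‖⁻¹ • q.im, by simp, ?_, ?_⟩
    · rw [norm_smul, norm_inv, norm_norm, inv_mul_cancel₀ hpos.ne']
    · rw [smul_smul, mul_inv_cancel₀ hpos.ne', one_smul, re_add_im]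

def slice (I : ℍ[ℝ]) : Set ℍ[ℝ] := {q | ∃ x y : ℝ, q = x + y • I}

def IsCircular (S : Set ℍ[ℝ]) : Prop :=
  ∀ (x y : ℝ) (I J : ℍ[ℝ]), I * I = -1 → J * J = -1 →
    (x : ℍ[ℝ]) + y • I ∈ S → (x : ℍ[ℝ]) + y • J ∈ S

theorem isCircular_setOf_aeval_eq_zero (p : ℝ[X]) : IsCircular {q | aeval q p = 0} :=
  fun x y _ _ hI hJ h =>
    (aeval_coe_add_smul_eq_zero_iff p hJ x y).2 ((aeval_coe_add_smul_eq_zero_iff p hI x y).1 h)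

theorem isCircular_setOf_qeval_eq_zero {R : ℍ[ℝ][X]} (h : ∀ n, IsSelfAdjoint (R.coeff n)) :
    IsCircular {q | qeval R q = 0} := by
  obtain ⟨p, rfl⟩ := exists_map_algebraMap_eq_of_isSelfAdjoint_coeff h
  simpa only [qeval_map_algebraMap] using isCircular_setOf_aeval_eq_zero p

noncomputable def sliceProj (I : ℍ[ℝ]) : ℍ[ℝ] →ₗ[ℝ] ℍ[ℝ] where
  toFun w := (w.re : ℍ[ℝ]) + inner ℝ I w.im • I
  map_add' a b := by
    simp only [re_add, coe_add, im_add, inner_add_right, add_smul]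
    abel
  map_smul' r a := by
    ext <;> simp [inner_smul_right] <;> ring

theorem sliceProj_coe_add_smul {I : ℍ[ℝ]} (hI0 : I.re = 0) (hI1 : ‖I‖ = 1) (x y : ℝ) :
    sliceProj I (x + y • I) = x + y • I := by
  have him : (x + y • I : ℍ[ℝ]).im = y • I := by
    rw [im_add, im_coe, zero_add, im_smul, show I.im = I by ext <;> simp [hI0]]
  show ((x + y • I : ℍ[ℝ]).re : ℍ[ℝ]) + inner ℝ I (x + y • I : ℍ[ℝ]).im • I = _
  rw [him, inner_smul_right, real_inner_self_eq_norm_sq, hI1]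
  simp [hI0]

theorem IsCircular.sliceProj_mem_convexHull {S : Set ℍ[ℝ]} (hS : IsCircular S) {I : ℍ[ℝ]}
    (hI0 : I.re = 0) (hI1 : ‖I‖ = 1) {w : ℍ[ℝ]} (hw : w ∈ S) :
    sliceProj I w ∈ convexHull ℝ (slice I ∩ S) := by
  obtain ⟨J, hJ0, hJ1, hwJ⟩ := exists_eq_re_add_norm_im_smul w
  have hI := mul_self_eq_neg_one hI0 hI1
  have hJ := mul_self_eq_neg_one hJ0 hJ1
  have hplus : (w.re : ℍ[ℝ]) + ‖w.im‖ • I ∈ slice I ∩ S :=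
    ⟨⟨_, _, rfl⟩, hS _ _ J I hJ hI (hwJ ▸ hw)⟩
  have hminus : (w.re : ℍ[ℝ]) + (-‖w.im‖) • I ∈ slice I ∩ S := by
    refine ⟨⟨_, _, rfl⟩, hS _ _ (-J) I (by rwa [neg_mul_neg]) hI ?_⟩
    rwa [neg_smul, smul_neg, neg_neg, ← hwJ]
  refine segment_subset_convexHull hminus hplus (add_smul_mem_segment_of_abs_le _ _ ?_)
  calc |inner ℝ I w.im| ≤ ‖I‖ * ‖w.im‖ := abs_real_inner_le_norm _ _
    _ = ‖w.im‖ := by rw [hI1, one_mul]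

theorem IsCircular.slice_inter_convexHull_subset {S : Set ℍ[ℝ]} (hS : IsCircular S)
    {I : ℍ[ℝ]} (hI0 : I.re = 0) (hI1 : ‖I‖ = 1) :
    slice I ∩ convexHull ℝ S ⊆ convexHull ℝ (slice I ∩ S) := by
  rintro _ ⟨⟨x, y, rfl⟩, hq⟩
  rw [← sliceProj_coe_add_smul hI0 hI1 x y]
  have hproj : sliceProj I '' convexHull ℝ S ⊆ convexHull ℝ (slice I ∩ S) := by
    rw [LinearMap.image_convexHull]
    refine convexHull_min ?_ (convex_convexHull ℝ _)
    rintro _ ⟨w, hw, rfl⟩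
    exact hS.sliceProj_mem_convexHull hI0 hI1 hw
  exact hproj (Set.mem_image_of_mem _ hq)

end Quaternion

theorem gauss_lucas_stmt14 (P Pc : Polynomial ℍ[ℝ])
    (hPc : ∀ n, Pc.coeff n = star (P.coeff n)) :
    ({q : ℍ[ℝ] | qeval (derivative P) q = 0} ⊆
        convexHull ℝ {q : ℍ[ℝ] | qeval (P * Pc) q = 0}) ↔
    (∀ I : ℍ[ℝ], I.re = 0 → ‖I‖ = 1 →
      {q : ℍ[ℝ] | (∃ x y : ℝ, q = (x : ℍ[ℝ]) + y • I) ∧ qeval (derivative P) q = 0} ⊆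
        convexHull ℝ
          {q : ℍ[ℝ] | (∃ x y : ℝ, q = (x : ℍ[ℝ]) + y • I) ∧ qeval (P * Pc) q = 0}) := by
  have hZ : IsCircular {q | qeval (P * Pc) q = 0} :=
    isCircular_setOf_qeval_eq_zero (isSelfAdjoint_coeff_mul_of_coeff_eq_star hPc)
  constructor
  · intro h I hI0 hI1 q ⟨hqI, hq⟩
    exact hZ.slice_inter_convexHull_subset hI0 hI1 ⟨hqI, h hq⟩
  · intro h q hq
    obtain ⟨J, hJ0, hJ1, hqJ⟩ := exists_eq_re_add_norm_im_smul q
    exact convexHull_mono (fun _ hr => hr.2) (h J hJ0 hJ1 ⟨⟨_, _, hqJ⟩, hq⟩)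
end

section
/- Let P₁, P₂ be complex polynomials of degree at most m with coefficients a₀,…,a_m and b₀,…,b_m. Then there exist c₀,…,c_m ∈ ℂ such that for every n = 0,…,2m, Σ_{k} (a_k·conj(a_{n-k}) + b_k·conj(b_{n-k})) = Σ_k c_k·conj(c_{n-k}); equivalently, P₁(z)conj(P₁(z̄)) + P₂(z)conj(P₂(z̄)) = M(z)·conj(M(z̄)) where M(z) = Σ_{n=0}^m zⁿ cₙ. -/
/-!
With `P̄ := P.map conj`, so that `P̄ z = conj (P (conj z))`, the polynomial `P₁ P̄₁ + P₂ P̄₂`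
is fixed by conjugation and equals `|P₁ x|² + |P₂ x|²` on the real line: it is a real
polynomial, nonnegative on `ℝ`. Such a polynomial is `M M̄`: a complex root `α` yields the real
factor `(X - α)(X - ᾱ)` (a real root is a minimum, hence a double root), the quotient is again
nonnegative, and by induction on the degree the factors `X - α` are collected into `M`.
Finally `deg (M M̄) = 2 deg M` bounds the degree of `M` by `m`.
-/

open Polynomial ComplexConjugate

namespace Polynomial

lemma exists_natDegree_le_coeff_eq {R : Type*} [Semiring R] {m : ℕ} {a : ℕ → R}
    (ha : ∀ n, m < n → a n = 0) : ∃ P : R[X], P.natDegree ≤ m ∧ P.coeff = a := by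
  classical
  set P := ∑ n ∈ Finset.range (m + 1), monomial n (a n)
  have hP : P.coeff = a := by
    ext k
    simp only [P, finsetSum_coeff, coeff_monomial, Finset.sum_ite_eq', Finset.mem_range]
    split_ifs with hk
    · rfl
    · exact (ha k (by omega)).symm
  exact ⟨P, natDegree_le_iff_coeff_eq_zero.mpr fun n hn => hP ▸ ha n hn, hP⟩

lemma eval_eq_sum_range_mul_coeff {R : Type*} [CommSemiring R] {P : R[X]} {m : ℕ}
    (h : P.natDegree ≤ m) (z : R) :
    P.eval z = ∑ n ∈ Finset.range (m + 1), z ^ n * P.coeff n := by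
  rw [eval_eq_sum_range' (Nat.lt_succ_of_le h)]
  exact Finset.sum_congr rfl fun n _ => mul_comm _ _

lemma coeff_mul_map {R : Type*} [Semiring R] (f : R →+* R) (P : R[X]) (n : ℕ) :
    (P * P.map f).coeff n = ∑ k ∈ Finset.range (n + 1), P.coeff k * f (P.coeff (n - k)) := by
  simp only [coeff_mul, Finset.Nat.sum_antidiagonal_eq_sum_range_succ_mk, coeff_map]

lemma eval_mul_map_conj (P : ℂ[X]) (z : ℂ) :
    (P * P.map conj).eval z = P.eval z * conj (P.eval (conj z)) := by
  rw [eval_mul, ← eval_map_apply, Complex.conj_conj]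

lemma natDegree_mul_map_conj (P : ℂ[X]) : (P * P.map conj).natDegree = 2 * P.natDegree := by
  rcases eq_or_ne P 0 with rfl | hP
  · simp
  rw [natDegree_mul hP (Polynomial.map_ne_zero hP), natDegree_map]
  ring

lemma map_conj_mul_map_conj (P : ℂ[X]) :
    (P * P.map conj).map conj = P * P.map conj := by
  rw [Polynomial.map_mul, map_map, mul_comm]
  simp

lemma map_conj_map_ofReal (q : ℝ[X]) :
    (q.map (algebraMap ℝ ℂ)).map conj = q.map (algebraMap ℝ ℂ) := by
  rw [map_map]
  congr 1
  exact RingHom.ext Complex.conj_ofReal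

lemma exists_map_ofReal_eq_of_map_conj_eq {p : ℂ[X]} (hp : p.map conj = p) :
    ∃ q : ℝ[X], q.map (algebraMap ℝ ℂ) = p := by
  rw [← mem_lifts, lifts_iff_coeff_lifts]
  intro n
  obtain ⟨r, hr⟩ := Complex.conj_eq_iff_real.mp
    (show conj (p.coeff n) = p.coeff n by rw [← coeff_map, hp])
  exact ⟨r, hr.symm⟩

lemma sq_X_sub_C_dvd_of_isRoot_of_nonneg {q : ℝ[X]} (hq : ∀ x, 0 ≤ q.eval x) {r : ℝ}
    (hr : q.IsRoot r) : (X - C r) ^ 2 ∣ q := by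
  rcases eq_or_ne q 0 with rfl | hq0
  · exact dvd_zero _
  have hmin : IsLocalMin (fun x => q.eval x) r :=
    Filter.Eventually.of_forall fun x => by simpa only [hr.eq_zero] using hq x
  have hderiv : q.derivative.IsRoot r := by
    simpa only [Polynomial.deriv, IsRoot.def] using hmin.deriv_eq_zero
  rw [← le_rootMultiplicity_iff hq0]
  exact (one_lt_rootMultiplicity_iff_isRoot hq0).mpr ⟨hr, hderiv⟩

lemma eval_nonneg_of_eval_mul_nonneg {s t : ℝ[X]} {r : ℝ} (hs : ∀ x ≠ r, 0 < s.eval x)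
    (hst : ∀ x, 0 ≤ (s * t).eval x) (x : ℝ) : 0 ≤ t.eval x := by
  have hclosed : IsClosed {x | 0 ≤ t.eval x} := isClosed_le continuous_const t.continuous
  have hsub : ({r}ᶜ : Set ℝ) ⊆ {x | 0 ≤ t.eval x} := fun y hy =>
    nonneg_of_mul_nonneg_right (by simpa only [eval_mul] using hst y) (hs y hy)
  exact hclosed.closure_subset_iff.mpr hsub
    ((dense_compl_singleton r).closure_eq ▸ Set.mem_univ x)

noncomputable def conjPairQuadratic (α : ℂ) : ℝ[X] :=
  X ^ 2 - C (2 * α.re) * X + C (Complex.normSq α)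

lemma map_conjPairQuadratic (α : ℂ) :
    (conjPairQuadratic α).map (algebraMap ℝ ℂ) = (X - C α) * (X - C α).map conj := by
  have hre : algebraMap ℝ ℂ (2 * α.re) = α + conj α := by
    rw [Complex.add_conj, Complex.coe_algebraMap]
  have hnormSq : algebraMap ℝ ℂ (Complex.normSq α) = α * conj α := by
    rw [Complex.mul_conj, Complex.coe_algebraMap]
  simp only [conjPairQuadratic, Polynomial.map_add, Polynomial.map_sub, Polynomial.map_mul,
    Polynomial.map_pow, map_X, Polynomial.map_C]
  rw [hre, hnormSq, C_add, C_mul]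
  ring

lemma eval_conjPairQuadratic (α : ℂ) (x : ℝ) :
    (conjPairQuadratic α).eval x = (x - α.re) ^ 2 + α.im ^ 2 := by
  simp only [conjPairQuadratic, eval_add, eval_sub, eval_mul, eval_pow, eval_X, eval_C,
    Complex.normSq_apply]
  ring

lemma monic_conjPairQuadratic (α : ℂ) : (conjPairQuadratic α).Monic := by
  unfold conjPairQuadratic; monicity!

lemma natDegree_conjPairQuadratic (α : ℂ) : (conjPairQuadratic α).natDegree = 2 := by
  unfold conjPairQuadratic; compute_degree!


lemma isRoot_conj_of_isRoot_map_ofReal {q : ℝ[X]} {α : ℂ}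
    (hα : (q.map (algebraMap ℝ ℂ)).IsRoot α) : (q.map (algebraMap ℝ ℂ)).IsRoot (conj α) := by
  rw [IsRoot, ← map_conj_map_ofReal, eval_map_apply, hα.eq_zero, map_zero]

lemma conjPairQuadratic_dvd_of_nonneg {q : ℝ[X]} (hq : ∀ x, 0 ≤ q.eval x) {α : ℂ}
    (hα : (q.map (algebraMap ℝ ℂ)).IsRoot α) : conjPairQuadratic α ∣ q := by
  rcases eq_or_ne α.im 0 with hreal | himag
  · obtain ⟨r, rfl⟩ : ∃ r : ℝ, α = r := ⟨α.re, Complex.ext rfl hreal⟩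
    have hr : q.IsRoot r := by
      rw [IsRoot, ← Complex.ofReal_inj, ← Complex.coe_algebraMap, ← eval_map_apply]
      simpa using hα
    convert sq_X_sub_C_dvd_of_isRoot_of_nonneg hq hr using 1
    simp only [conjPairQuadratic, Complex.ofReal_re, Complex.normSq_ofReal, C_mul, C_ofNat]
    ring
  · rw [← map_dvd_map _ (algebraMap ℝ ℂ).injective (monic_conjPairQuadratic α),
      map_conjPairQuadratic, Polynomial.map_sub, map_X, Polynomial.map_C]
    have hne : IsUnit (α - conj α) := by
      exact (sub_ne_zero.mpr fun h => himag (Complex.conj_eq_iff_im.mp h.symm)).isUnit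
    exact (isCoprime_X_sub_C_of_isUnit_sub hne).mul_dvd (dvd_iff_isRoot.mpr hα)
      (dvd_iff_isRoot.mpr (isRoot_conj_of_isRoot_map_ofReal hα))

theorem exists_map_ofReal_eq_mul_map_conj_of_nonneg (q : ℝ[X]) (hq : ∀ x, 0 ≤ q.eval x) :
    ∃ M : ℂ[X], q.map (algebraMap ℝ ℂ) = M * M.map conj := by
  induction hn : q.natDegree using Nat.strong_induction_on generalizing q with
  | _ n ih =>
  rcases eq_or_ne n 0 with rfl | hn0
  · obtain ⟨r, rfl⟩ := natDegree_eq_zero.mp hn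
    refine ⟨C (Real.sqrt r : ℂ), ?_⟩
    rw [Polynomial.map_C, Polynomial.map_C, ← C_mul, Complex.conj_ofReal, ← Complex.ofReal_mul,
      Real.mul_self_sqrt (by simpa using hq 0), Complex.coe_algebraMap]
  obtain ⟨α, hα⟩ := IsAlgClosed.exists_root (q.map (algebraMap ℝ ℂ))
    (by rw [degree_map]; exact (natDegree_pos_iff_degree_pos.mp (by omega)).ne')
  obtain ⟨q₁, rfl⟩ := conjPairQuadratic_dvd_of_nonneg hq hα
  have hq₁ : q₁ ≠ 0 := by rintro rfl; simp at hn; omega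
  have hdeg : q₁.natDegree < n := by
    rw [← hn, natDegree_mul (monic_conjPairQuadratic α).ne_zero hq₁,
      natDegree_conjPairQuadratic]
    omega
  have hpos : ∀ x ≠ α.re, 0 < (conjPairQuadratic α).eval x := fun x hx => by
    rw [eval_conjPairQuadratic]
    have := sub_ne_zero.mpr hx
    positivity
  obtain ⟨M₁, hM₁⟩ := ih _ hdeg q₁ (eval_nonneg_of_eval_mul_nonneg hpos hq) rfl
  refine ⟨(X - C α) * M₁, ?_⟩
  rw [Polynomial.map_mul, map_conjPairQuadratic, hM₁, Polynomial.map_mul]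
  ring

theorem exists_sum_mul_map_conj_eq {ι : Type*} (s : Finset ι) (A : ι → ℂ[X]) :
    ∃ M : ℂ[X], ∑ i ∈ s, A i * (A i).map conj = M * M.map conj := by
  obtain ⟨q, hq⟩ := exists_map_ofReal_eq_of_map_conj_eq (p := ∑ i ∈ s, A i * (A i).map conj)
    (by simp only [Polynomial.map_sum, map_conj_mul_map_conj])
  have hnonneg : ∀ x, 0 ≤ q.eval x := fun x => by
    have h : ((q.eval x : ℝ) : ℂ) = ∑ i ∈ s, (Complex.normSq ((A i).eval x) : ℂ) := by
      rw [← Complex.coe_algebraMap, ← eval_map_apply, hq, eval_finsetSum]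
      simp only [eval_mul_map_conj, Complex.coe_algebraMap, Complex.conj_ofReal, Complex.mul_conj]
    rw [← Complex.ofReal_sum, Complex.ofReal_inj] at h
    exact h ▸ Finset.sum_nonneg fun i _ => Complex.normSq_nonneg _
  obtain ⟨M, hM⟩ := exists_map_ofReal_eq_mul_map_conj_of_nonneg q hnonneg
  exact ⟨M, hq ▸ hM⟩

end Polynomial

theorem gauss_lucas_stmt17 (m : ℕ) (a b : ℕ → ℂ)
    (ha : ∀ n, m < n → a n = 0) (hb : ∀ n, m < n → b n = 0) :
    ∃ c : ℕ → ℂ, (∀ n, m < n → c n = 0) ∧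
      (∀ n, ∑ k ∈ Finset.range (n + 1),
          (a k * (starRingEnd ℂ) (a (n - k)) + b k * (starRingEnd ℂ) (b (n - k))) =
        ∑ k ∈ Finset.range (n + 1), c k * (starRingEnd ℂ) (c (n - k))) ∧
      (∀ z : ℂ,
        (∑ n ∈ Finset.range (m + 1), z ^ n * a n) *
            (starRingEnd ℂ) (∑ n ∈ Finset.range (m + 1), ((starRingEnd ℂ) z) ^ n * a n) +
          (∑ n ∈ Finset.range (m + 1), z ^ n * b n) *
            (starRingEnd ℂ) (∑ n ∈ Finset.range (m + 1), ((starRingEnd ℂ) z) ^ n * b n) =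
        (∑ n ∈ Finset.range (m + 1), z ^ n * c n) *
          (starRingEnd ℂ) (∑ n ∈ Finset.range (m + 1), ((starRingEnd ℂ) z) ^ n * c n)) := by
  obtain ⟨A, hA, rfl⟩ := exists_natDegree_le_coeff_eq ha
  obtain ⟨B, hB, rfl⟩ := exists_natDegree_le_coeff_eq hb
  obtain ⟨M, hM⟩ := exists_sum_mul_map_conj_eq Finset.univ ![A, B]
  rw [Fin.sum_univ_two, Matrix.cons_val_zero, Matrix.cons_val_one, Matrix.cons_val_zero] at hM
  have hM_deg : M.natDegree ≤ m := by
    have h := natDegree_add_le (A * A.map conj) (B * B.map conj)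
    rw [hM, natDegree_mul_map_conj, natDegree_mul_map_conj, natDegree_mul_map_conj] at h
    omega
  refine ⟨M.coeff, fun n hn => coeff_eq_zero_of_natDegree_lt (hM_deg.trans_lt hn),
    fun n => ?_, fun z => ?_⟩
  · rw [Finset.sum_add_distrib, ← coeff_mul_map, ← coeff_mul_map, ← coeff_mul_map, ← coeff_add,
      hM]
  · rw [← eval_eq_sum_range_mul_coeff hA, ← eval_eq_sum_range_mul_coeff hA,
      ← eval_eq_sum_range_mul_coeff hB, ← eval_eq_sum_range_mul_coeff hB,
      ← eval_eq_sum_range_mul_coeff hM_deg, ← eval_eq_sum_range_mul_coeff hM_deg,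
      ← eval_mul_map_conj, ← eval_mul_map_conj, ← eval_mul_map_conj, ← eval_add, hM]
end
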